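/- arXiv:1401.8038 — 3 statements merged into one kernel-verified Lean document; each statement's English description precedes it below -/
import Mathlib

section
/- Sorted-prefix stability under lowering one bid's density: let B be a family of bids with bid at index j equal to (d1, v1), and let B' be obtained from B by replacing only bid j with (d2, v2) where e(d2, v2) ≤ e(d1, v1). Then every index i ≠ j that precedes j in the density-sorted order of B also precedes j in the density-sorted order of B', the relative order of the indices other than j is the same in both sorted lists, and every index i ≠ j preceding j in the sorted order of B receives the same grant decision under GRP-A applied to B as under GRP-A applied to B'. -/
open Classical Finset

noncomputable section

/-- A bundle: requested amounts of each of the `k` VM types. -/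
abbrev Bundle (k : ℕ) := Fin k → ℕ

/-- A bid: a bundle together with a declared valuation. -/
abbrev Bid (k : ℕ) := Bundle k × ℝ

/-- A bundle is nonzero if some coordinate is positive. -/
def nonzeroBundle {k : ℕ} (d : Bundle k) : Prop := ∃ i, 0 < d i

/-- A valid bid requests a nonzero bundle and declares a nonnegative valuation. -/
def validBid {k : ℕ} (b : Bid k) : Prop := nonzeroBundle b.1 ∧ 0 ≤ b.2

/-- The weighted bundle size `d̂(d) = Σ_i (d i)·(f i)`. -/
def dhat {k : ℕ} (f : Fin k → ℝ) (d : Bundle k) : ℝ := ∑ i, (d i : ℝ) * f i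

/-- The bundle reserve price `ô(d) = Σ_i (d i)·(o i)`. -/
def ohat {k : ℕ} (o : Fin k → ℝ) (d : Bundle k) : ℝ := ∑ i, (d i : ℝ) * o i

/-- The bid density `e(d, v) = v / (d̂ d)^q`. -/
def density {k : ℕ} (f : Fin k → ℝ) (q : ℝ) (b : Bid k) : ℝ := b.2 / (dhat f b.1) ^ q

/-- The indices of the active set `A`, sorted in non-increasing order of bid density;
`mergeSort` is stable and `A.sort (· ≤ ·)` lists indices increasingly, so ties are
broken by smaller index first. -/
def sortedBids {k n : ℕ} (f : Fin k → ℝ) (q : ℝ) (B : Fin n → Bid k) (A : Finset (Fin n)) :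
    List (Fin n) :=
  (A.sort (· ≤ ·)).mergeSort (fun i j => decide (density f q (B j) ≤ density f q (B i)))

/-- Greedy-RP allocation scheme (GRP-A) run on the active index set `A`: process the
indices in non-increasing density order and grant an index whenever both the available
resource constraint (ARC) and the reserve price constraint (RPC) hold. -/
def grants {k n : ℕ} (o f : Fin k → ℝ) (s : Fin k → ℕ) (q : ℝ) (B : Fin n → Bid k)
    (A : Finset (Fin n)) : Finset (Fin n) :=
  (sortedBids f q B A).foldl
    (fun W j =>
      if (∀ i, (B j).1 i + ∑ j' ∈ W, (B j').1 i ≤ s i) ∧ ohat o (B j).1 ≤ (B j).2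
      then insert j W else W) ∅

/-- `W(B)`: the winners of GRP-A run on all bids. -/
def winners {k n : ℕ} (o f : Fin k → ℝ) (s : Fin k → ℕ) (q : ℝ) (B : Fin n → Bid k) :
    Finset (Fin n) :=
  grants o f s q B Finset.univ

/-- `W'_j = W(B_{-j}) \ W(B)`: the new winners once bid `j` is removed. -/
def competitorSet {k n : ℕ} (o f : Fin k → ℝ) (s : Fin k → ℕ) (q : ℝ) (B : Fin n → Bid k)
    (j : Fin n) : Finset (Fin n) :=
  grants o f s q B (Finset.univ.erase j) \ winners o f s q B

/-- The competitor density `e_j^comp`: the maximum density over `W'_j`, or `0` if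
`W'_j` is empty. -/
def ecomp {k n : ℕ} (o f : Fin k → ℝ) (s : Fin k → ℕ) (q : ℝ) (B : Fin n → Bid k)
    (j : Fin n) : ℝ :=
  if h : (competitorSet o f s q B j).Nonempty
  then (competitorSet o f s q B j).sup' h (fun i => density f q (B i))
  else 0

/-- The bid-specific reserve density `e_res(b) = ô(d)/(d̂ d)^q`. -/
def eres {k : ℕ} (o f : Fin k → ℝ) (q : ℝ) (b : Bid k) : ℝ := ohat o b.1 / (dhat f b.1) ^ q

/-- Greedy-RP pricing scheme (GRP-P): a winner `j` pays
`p_j = max(e_j^comp, e_res(b_j)) · (d̂ d_j)^q`; a non-winner pays `0`. -/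
def payment {k n : ℕ} (o f : Fin k → ℝ) (s : Fin k → ℕ) (q : ℝ) (B : Fin n → Bid k)
    (j : Fin n) : ℝ :=
  if j ∈ winners o f s q B
  then max (ecomp o f s q B j) (eres o f q (B j)) * (dhat f (B j).1) ^ q
  else 0

/-! Sort indices by the key (density decreasing, index increasing). This is a strict linear
order, and since merge sort is stable, `sortedBids` is exactly the list sorted strictly by this key.
Lowering the density of bid `j` alone can only move `j` later and leaves the keys of all other
indices unchanged, which gives the first two claims. For `i` before `j`, the indices processed
before `i` then form the same list in both runs and avoid `j`; the grant decision on `i` depends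
only on their bids and on bid `i`. -/
section SortKey

open List

variable {α β : Type*} [LinearOrder α] [LinearOrder β]

/-- Position of `a` in the order of decreasing `g`, ties broken by increasing `a`. -/
def sortKey (g : α → β) (a : α) : βᵒᵈ ×ₗ α := toLex (OrderDual.toDual (g a), a)

theorem sortKey_lt_sortKey_iff {g : α → β} {a b : α} :
    sortKey g a < sortKey g b ↔ g b < g a ∨ g a = g b ∧ a < b := by
  simp only [sortKey, Prod.Lex.toLex_lt_toLex, OrderDual.toDual_lt_toDual, OrderDual.toDual_inj]

theorem sortKey_le_sortKey_of_le {g g' : α → β} {a : α} (h : g' a ≤ g a) :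
    sortKey g a ≤ sortKey g' a :=
  Prod.Lex.toLex_le_toLex.mpr <| h.lt_or_eq.imp id fun h => ⟨h.symm, le_rfl⟩

theorem pairwise_sortKey_mergeSort (g : α → β) {l : List α} (hl : l.Pairwise (· < ·)) :
    (l.mergeSort fun a b => decide (g b ≤ g a)).Pairwise
      (fun a b => sortKey g a < sortKey g b) := by
  set le : α → α → Bool := fun a b => decide (g b ≤ g a)
  have trans (a b c : α) (hab : le a b) (hbc : le b c) : le a c := by
    simp only [le, decide_eq_true_eq] at *
    exact hbc.trans hab
  have total (a b : α) : le a b || le b a := by simpa [le] using le_total (g b) (g a)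
  -- stability: each class of equal `g`-value keeps its increasing order
  have hclass (c : β) : (l.mergeSort le).filter (g · = c) = l.filter (g · = c) := by
    have hsub : l.filter (g · = c) <+ (l.mergeSort le).filter (g · = c) := by
      simpa using (sublist_mergeSort trans total
        (pairwise_of_forall_mem_list (by simp +contextual [le]))
        (filter_sublist (p := (g · = c)))).filter (g · = c)
    exact (hsub.eq_of_length ((mergeSort_perm l le).filter _).length_eq.symm).symm
  rw [pairwise_iff_forall_sublist]
  intro a b hab
  have hle : g b ≤ g a := by
    simpa [le] using pairwise_iff_forall_sublist.mp (pairwise_mergeSort trans total l) hab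
  rw [sortKey_lt_sortKey_iff]
  refine hle.lt_or_eq.imp id fun heq => ⟨heq.symm, ?_⟩
  have hab' : [a, b] <+ l.filter (g · = g a) := by
    simpa [← hclass, heq] using hab.filter (g · = g a)
  exact pairwise_iff_forall_sublist.mp (hl.filter _) hab'

end SortKey

namespace List

variable {α γ : Type*}

theorem idxOf_lt_idxOf_iff_of_pairwise [DecidableEq α] [LinearOrder γ] {key : α → γ} {l : List α}
    (hl : l.Pairwise (fun a b => key a < key b)) {a b : α} (ha : a ∈ l) (hb : b ∈ l) :
    l.idxOf a < l.idxOf b ↔ key a < key b := by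
  have hmono : StrictMono (fun m : Fin l.length => key l[m]) :=
    fun m m' h => pairwise_iff_getElem.mp hl m m' m.2 m'.2 h
  have := hmono.lt_iff_lt (a := ⟨l.idxOf a, idxOf_lt_length_of_mem ha⟩)
    (b := ⟨l.idxOf b, idxOf_lt_length_of_mem hb⟩)
  simpa using this.symm

theorem eq_of_append_cons_filter_ne [DecidableEq α] {p p' t t' : List α} {a b : α} (hab : a ≠ b)
    (hp : a ∉ p ∧ b ∉ p) (hp' : a ∉ p' ∧ b ∉ p')
    (h : (p ++ a :: t).filter (· ≠ b) = (p' ++ a :: t').filter (· ≠ b)) : p = p' := by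
  have prefix_eq {p t : List α} (hp : a ∉ p ∧ b ∉ p) :
      ((p ++ a :: t).filter (· ≠ b)).takeWhile (· ≠ a) = p := by
    have hpb : p.filter (· ≠ b) = p := filter_eq_self.mpr fun x hx => by
      simpa using ne_of_mem_of_not_mem hx hp.2
    rw [filter_append, hpb, filter_cons_of_pos (by simpa using hab),
      takeWhile_append_of_pos fun x hx => by simpa using ne_of_mem_of_not_mem hx hp.1]
    simp
  rw [← prefix_eq (t := t) hp, h, prefix_eq hp']

theorem notMem_of_pairwise_append_cons [LinearOrder γ] {key : α → γ} {p t : List α} {a b : α}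
    (hl : (p ++ a :: t).Pairwise (fun x y => key x < key y)) (hab : key a ≤ key b) : b ∉ p :=
  fun hb => (pairwise_append.mp hl).2.2 b hb a mem_cons_self |>.not_ge hab

end List

section Allocation

variable {k n : ℕ}

def grantStep (o : Fin k → ℝ) (s : Fin k → ℕ) (B : Fin n → Bid k)
    (W : Finset (Fin n)) (j : Fin n) : Finset (Fin n) :=
  if (∀ i, (B j).1 i + ∑ j' ∈ W, (B j').1 i ≤ s i) ∧ ohat o (B j).1 ≤ (B j).2
  then insert j W else W

theorem grants_eq_foldl (o f : Fin k → ℝ) (s : Fin k → ℕ) (q : ℝ) (B : Fin n → Bid k)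
    (A : Finset (Fin n)) :
    grants o f s q B A = (sortedBids f q B A).foldl (grantStep o s B) ∅ := rfl

variable {o : Fin k → ℝ} {s : Fin k → ℕ}

theorem mem_grantStep_of_ne {B : Fin n → Bid k} {W : Finset (Fin n)} {j x : Fin n}
    (hx : x ≠ j) : x ∈ grantStep o s B W j ↔ x ∈ W := by
  unfold grantStep
  split_ifs <;> simp [hx]

theorem mem_foldl_grantStep_of_notMem {B : Fin n → Bid k} {x : Fin n} :
    ∀ {l : List (Fin n)} {W : Finset (Fin n)}, x ∉ l →
      (x ∈ l.foldl (grantStep o s B) W ↔ x ∈ W)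
  | [], _, _ => Iff.rfl
  | a :: l, W, hx => by
    rw [List.mem_cons, not_or] at hx
    rw [List.foldl_cons, mem_foldl_grantStep_of_notMem hx.2, mem_grantStep_of_ne hx.1]

theorem grantStep_congr {B B' : Fin n → Bid k} {W : Finset (Fin n)} {j : Fin n}
    (hB : ∀ x ∈ insert j W, B x = B' x) : grantStep o s B W j = grantStep o s B' W j := by
  have hsum (i : Fin k) : ∑ j' ∈ W, (B j').1 i = ∑ j' ∈ W, (B' j').1 i :=
    Finset.sum_congr rfl fun x hx => by rw [hB x (Finset.mem_insert_of_mem hx)]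
  simp only [grantStep, hsum, hB j (Finset.mem_insert_self j W)]

theorem foldl_grantStep_congr {B B' : Fin n → Bid k} :
    ∀ {l : List (Fin n)} {W : Finset (Fin n)}, (∀ x ∈ W, B x = B' x) →
      (∀ x ∈ l, B x = B' x) → l.foldl (grantStep o s B) W = l.foldl (grantStep o s B') W
  | [], _, _, _ => rfl
  | a :: l, W, hW, hl => by
    have hB : ∀ x ∈ insert a W, B x = B' x := by
      simpa [Finset.forall_mem_insert] using ⟨hl a List.mem_cons_self, hW⟩
    have hW' : ∀ x ∈ grantStep o s B W a, B x = B' x := fun x hx => by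
      by_cases hxa : x = a
      · exact hxa ▸ hB a (Finset.mem_insert_self a W)
      · exact hW x ((mem_grantStep_of_ne hxa).mp hx)
    rw [List.foldl_cons, List.foldl_cons, ← grantStep_congr hB]
    exact foldl_grantStep_congr hW' fun x hx => hl x (List.mem_cons_of_mem a hx)

end Allocation

section SortedBids

variable {k n : ℕ}

def bidKey (f : Fin k → ℝ) (q : ℝ) (B : Fin n → Bid k) : Fin n → ℝᵒᵈ ×ₗ Fin n :=
  sortKey fun i => density f q (B i)

variable {f : Fin k → ℝ} {q : ℝ} {B B' : Fin n → Bid k} {A : Finset (Fin n)}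

theorem nodup_sortedBids : (sortedBids f q B A).Nodup :=
  (List.mergeSort_perm _ _).nodup_iff.mpr (Finset.sort_nodup _ _)

theorem mem_sortedBids {i : Fin n} : i ∈ sortedBids f q B A ↔ i ∈ A := by
  simp [sortedBids, List.mem_mergeSort]

theorem pairwise_bidKey_sortedBids :
    (sortedBids f q B A).Pairwise (fun a b => bidKey f q B a < bidKey f q B b) :=
  pairwise_sortKey_mergeSort _ (Finset.sortedLT_sort A).pairwise

theorem idxOf_lt_idxOf_sortedBids_iff {a b : Fin n} (ha : a ∈ A) (hb : b ∈ A) :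
    (sortedBids f q B A).idxOf a < (sortedBids f q B A).idxOf b ↔
      bidKey f q B a < bidKey f q B b :=
  List.idxOf_lt_idxOf_iff_of_pairwise pairwise_bidKey_sortedBids
    (mem_sortedBids.mpr ha) (mem_sortedBids.mpr hb)

theorem mem_grants_iff_mem_foldl_of_eq_append (o : Fin k → ℝ) (s : Fin k → ℕ)
    {i : Fin n} {p t : List (Fin n)} (hL : sortedBids f q B A = p ++ i :: t) :
    i ∈ grants o f s q B A ↔ i ∈ (p ++ [i]).foldl (grantStep o s B) ∅ := by
  have hit : i ∉ t := by
    have := hL ▸ nodup_sortedBids (f := f) (q := q) (B := B) (A := A)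
    exact (List.nodup_cons.mp this.of_append_right).1
  rw [grants_eq_foldl, hL, show p ++ i :: t = (p ++ [i]) ++ t by simp, List.foldl_append,
    mem_foldl_grantStep_of_notMem hit]

variable {j : Fin n}

theorem bidKey_eq_of_ne (hsame : ∀ i, i ≠ j → B' i = B i) {i : Fin n} (hij : i ≠ j) :
    bidKey f q B' i = bidKey f q B i := by
  simp [bidKey, sortKey, hsame i hij]

theorem bidKey_lt_bidKey_of_density_le (hsame : ∀ i, i ≠ j → B' i = B i)
    (hdens : density f q (B' j) ≤ density f q (B j))
    {i : Fin n} (hij : i ≠ j)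
    (h : bidKey f q B i < bidKey f q B j) :
    bidKey f q B' i < bidKey f q B' j :=
  calc bidKey f q B' i
      = bidKey f q B i := bidKey_eq_of_ne hsame hij
    _ < bidKey f q B j := h
    _ ≤ bidKey f q B' j := sortKey_le_sortKey_of_le hdens

theorem filter_ne_sortedBids_eq (hsame : ∀ i, i ≠ j → B' i = B i) :
    (sortedBids f q B A).filter (· ≠ j) = (sortedBids f q B' A).filter (· ≠ j) := by
  refine List.Perm.eq_of_pairwise (fun a b _ _ hab hba => (lt_asymm hab hba).elim) ?_
    (pairwise_bidKey_sortedBids.filter _) (List.Perm.filter _ ?_)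
  · refine (pairwise_bidKey_sortedBids.filter _).imp_of_mem fun {a b} ha hb hab => ?_
    rwa [bidKey_eq_of_ne hsame (by simpa using (List.mem_filter.mp ha).2),
      bidKey_eq_of_ne hsame (by simpa using (List.mem_filter.mp hb).2)]
  · exact (List.mergeSort_perm _ _).trans (List.mergeSort_perm _ _).symm

theorem mem_grants_iff_of_bidKey_lt (o : Fin k → ℝ) (s : Fin k → ℕ)
    (hsame : ∀ i, i ≠ j → B' i = B i)
    (hdens : density f q (B' j) ≤ density f q (B j)) {i : Fin n} (hi : i ∈ A) (hij : i ≠ j)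
    (h : bidKey f q B i < bidKey f q B j) :
    i ∈ grants o f s q B A ↔ i ∈ grants o f s q B' A := by
  have h' := bidKey_lt_bidKey_of_density_le hsame hdens hij h
  obtain ⟨p, t, hL⟩ := List.append_of_mem (mem_sortedBids.mpr hi : i ∈ sortedBids f q B A)
  obtain ⟨p', t', hL'⟩ := List.append_of_mem (mem_sortedBids.mpr hi : i ∈ sortedBids f q B' A)
  have hp : i ∉ p ∧ j ∉ p := by
    have hl := hL ▸ pairwise_bidKey_sortedBids
    exact ⟨List.notMem_of_pairwise_append_cons hl le_rfl,
      List.notMem_of_pairwise_append_cons hl h.le⟩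
  have hp' : i ∉ p' ∧ j ∉ p' := by
    have hl := hL' ▸ pairwise_bidKey_sortedBids
    exact ⟨List.notMem_of_pairwise_append_cons hl le_rfl,
      List.notMem_of_pairwise_append_cons hl h'.le⟩
  obtain rfl : p = p' :=
    List.eq_of_append_cons_filter_ne hij hp hp' (hL ▸ hL' ▸ filter_ne_sortedBids_eq hsame)
  rw [mem_grants_iff_mem_foldl_of_eq_append o s hL, mem_grants_iff_mem_foldl_of_eq_append o s hL',
    foldl_grantStep_congr (by simp) fun x hx => (hsame x ?_).symm]
  rintro rfl
  rcases List.mem_append.mp hx with hx | hx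
  · exact hp.2 hx
  · exact hij (List.mem_singleton.mp hx).symm

end SortedBids

theorem sorted_prefix_stable_general {k n : ℕ} (f o : Fin k → ℝ) (s : Fin k → ℕ) (q : ℝ)
    (B B' : Fin n → Bid k) (j : Fin n)
    (hsame : ∀ i, i ≠ j → B' i = B i)
    (hdens : density f q (B' j) ≤ density f q (B j)) :
    (∀ i, i ≠ j →
        (sortedBids f q B Finset.univ).idxOf i < (sortedBids f q B Finset.univ).idxOf j →
        (sortedBids f q B' Finset.univ).idxOf i < (sortedBids f q B' Finset.univ).idxOf j) ∧
    ((sortedBids f q B Finset.univ).filter (fun i => i ≠ j)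
      = (sortedBids f q B' Finset.univ).filter (fun i => i ≠ j)) ∧
    (∀ i, i ≠ j →
        (sortedBids f q B Finset.univ).idxOf i < (sortedBids f q B Finset.univ).idxOf j →
        (i ∈ grants o f s q B Finset.univ ↔ i ∈ grants o f s q B' Finset.univ)) := by
  have hkey (B : Fin n → Bid k) (i : Fin n) :
      (sortedBids f q B univ).idxOf i < (sortedBids f q B univ).idxOf j ↔
        bidKey f q B i < bidKey f q B j :=
    idxOf_lt_idxOf_sortedBids_iff (mem_univ i) (mem_univ j)
  refine ⟨fun i hij hlt => ?_, filter_ne_sortedBids_eq hsame, fun i hij hlt => ?_⟩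
  · exact (hkey B' i).mpr (bidKey_lt_bidKey_of_density_le hsame hdens hij ((hkey B i).mp hlt))
  · exact mem_grants_iff_of_bidKey_lt o s hsame hdens (mem_univ i) hij ((hkey B i).mp hlt)

/-- sorted-prefix stability under lowering one bid's density. If `B'`
is obtained from `B` by replacing only bid `j` by a bid of no greater density, then
(a) every index `i ≠ j` preceding `j` in the density-sorted order of `B` also
precedes `j` in the density-sorted order of `B'`; (b) the relative order of the
indices other than `j` is the same in both sorted lists; and (c) every index
`i ≠ j` preceding `j` in the sorted order of `B` receives the same grant decision
under GRP-A applied to `B` as under GRP-A applied to `B'`. -/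
theorem sorted_prefix_stable {k n : ℕ} (hk : 1 ≤ k)
    (f o : Fin k → ℝ) (hf : ∀ i, 0 < f i) (ho : ∀ i, 0 ≤ o i)
    (s : Fin k → ℕ) (q : ℝ) (hq : 0 < q)
    (B B' : Fin n → Bid k) (j : Fin n)
    (hB : ∀ i, validBid (B i)) (hB' : validBid (B' j))
    (hsame : ∀ i, i ≠ j → B' i = B i)
    (hdens : density f q (B' j) ≤ density f q (B j)) :
    (∀ i, i ≠ j →
        (sortedBids f q B Finset.univ).idxOf i < (sortedBids f q B Finset.univ).idxOf j →
        (sortedBids f q B' Finset.univ).idxOf i < (sortedBids f q B' Finset.univ).idxOf j) ∧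
    ((sortedBids f q B Finset.univ).filter (fun i => i ≠ j)
      = (sortedBids f q B' Finset.univ).filter (fun i => i ≠ j)) ∧
    (∀ i, i ≠ j →
        (sortedBids f q B Finset.univ).idxOf i < (sortedBids f q B Finset.univ).idxOf j →
        (i ∈ grants o f s q B Finset.univ ↔ i ∈ grants o f s q B' Finset.univ)) :=
  sorted_prefix_stable_general f o s q B B' j hsame hdens
end
end

section
/- Lemma 2 (the Greedy-RP pricing scheme determines critical-value payments): fix a family of bids B and a winner j ∈ W(B) with payment p_j determined by GRP-P. Keeping the bundle d_j and all the other bids fixed, if bid j instead reports any valuation v' with v' > p_j then index j is granted by GRP-A in the modified family, and if it reports any valuation v' with 0 ≤ v' < p_j then index j is not granted. -/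
open Classical Finset

noncomputable section

/-!
GRP-A is a greedy pass in a fixed order (density, then index), so an index is granted exactly
when it passes (ARC) and (RPC) against the indices granted before it, and the runs with and
without bid `j` agree on everything processed before `j`. If `v' > p_j`, the new density of `j`
exceeds that of every competitor in `W'_j`; hence every index granted before `j` is a winner
of `W(B)` other than `j`, and `j` still fits. If `v' < p_j` but (RPC) holds, then
`p_j = e(c)·d̂(d_j)^q` for the densest competitor `c`. That `c` is the first index at which the
two runs diverge, so it was rejected in `W(B)` only because `j` took its place: `j`, `c` and the
indices granted before `c` do not fit together. With valuation `v'` all of those except `j` are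
processed before `j` and granted, so `j` no longer fits.
-/

section Greedy

variable {α : Type*} [DecidableEq α] (P : Finset α → α → Prop) [∀ W x, Decidable (P W x)]

def greedyStep (W : Finset α) (x : α) : Finset α :=
  if P W x then insert x W else W

variable {P}

theorem mem_greedyStep {W : Finset α} {a x : α} :
    x ∈ greedyStep P W a ↔ x ∈ W ∨ x = a ∧ P W a := by
  unfold greedyStep
  split_ifs with h <;> simp [h, or_comm]

theorem filter_greedyStep {r : α → α → Prop} {W : Finset α} {a x : α} (h : ¬ r a x) :
    (greedyStep P W a).filter (r · x) = W.filter (r · x) := by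
  unfold greedyStep
  split_ifs
  · rw [Finset.filter_insert, if_neg h]
  · rfl

theorem foldl_greedyStep_induction {Q : Finset α → Prop} {l : List α}
    (hstep : ∀ W, ∀ x ∈ l, Q W → P W x → Q (insert x W)) {W₀ : Finset α} (h₀ : Q W₀) :
    Q (l.foldl (greedyStep P) W₀) := by
  induction l generalizing W₀ with
  | nil => exact h₀
  | cons a l ih =>
    refine ih (fun W x hx => hstep W x (List.mem_cons_of_mem a hx)) ?_
    unfold greedyStep
    split_ifs with h
    · exact hstep W₀ a List.mem_cons_self h₀ h
    · exact h₀

theorem mem_of_mem_foldl_greedyStep {l : List α} {x : α}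
    (hx : x ∈ l.foldl (greedyStep P) ∅) : x ∈ l :=
  foldl_greedyStep_induction (Q := fun W => ∀ y ∈ W, y ∈ l)
    (fun _ _ ha hW _ y hy => (Finset.mem_insert.mp hy).elim (· ▸ ha) (hW y)) (by simp) x hx

theorem mem_foldl_greedyStep_iff {r : α → α → Prop} (hr : ∀ a b, r a b → ¬ r b a)
    {l : List α} (hl : l.Pairwise r) (x : α) :
    x ∈ l.foldl (greedyStep P) ∅ ↔
      x ∈ l ∧ P ((l.foldl (greedyStep P) ∅).filter (r · x)) x := by
  induction l using List.reverseRecOn generalizing x with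
  | nil => simp
  | append_singleton l a ih =>
    obtain ⟨hl, -, hla⟩ := List.pairwise_append.mp hl
    replace hla : ∀ w ∈ l, r w a := fun w hw => hla w hw a (List.mem_singleton_self a)
    rw [List.foldl_append, List.foldl_cons, List.foldl_nil, List.mem_append,
      List.mem_singleton, mem_greedyStep]
    set W := l.foldl (greedyStep P) ∅
    have hWl : ∀ w ∈ W, w ∈ l := fun w hw => mem_of_mem_foldl_greedyStep hw
    by_cases hxa : x = a
    · subst hxa
      have hxl : x ∉ l := fun h => hr _ _ (hla x h) (hla x h)
      have hWx : W.filter (r · x) = W := Finset.filter_true_of_mem fun w hw => hla w (hWl w hw)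
      rw [filter_greedyStep fun h => hr _ _ h h, hWx]
      have hxW : x ∉ W := fun h => hxl (hWl x h)
      simp [hxl, hxW]
    · by_cases hxl : x ∈ l
      · rw [filter_greedyStep (hr _ _ (hla x hxl)), ih hl]
        simp [hxa, hxl]
      · have hxW : x ∉ W := fun h => hxl (hWl x h)
        simp [hxa, hxl, hxW]

end Greedy

namespace GreedyRP

variable {k n : ℕ}

def procKey (f : Fin k → ℝ) (q : ℝ) (B : Fin n → Bid k) (x : Fin n) : ℝᵒᵈ ×ₗ Fin n :=
  toLex (OrderDual.toDual (density f q (B x)), x)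

def ProcessedBefore (f : Fin k → ℝ) (q : ℝ) (B : Fin n → Bid k) (x y : Fin n) : Prop :=
  procKey f q B x < procKey f q B y

variable {f : Fin k → ℝ} {q : ℝ} {B : Fin n → Bid k} {x y : Fin n}

theorem dhat_pos (hf : ∀ i, 0 < f i) {d : Bundle k} (hd : nonzeroBundle d) : 0 < dhat f d := by
  obtain ⟨i, hi⟩ := hd
  exact sum_pos' (fun i _ => mul_nonneg (Nat.cast_nonneg _) (hf i).le)
    ⟨i, mem_univ i, mul_pos (Nat.cast_pos.mpr hi) (hf i)⟩

theorem processedBefore_iff :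
    ProcessedBefore f q B x y ↔ density f q (B y) < density f q (B x) ∨
      density f q (B x) = density f q (B y) ∧ x < y := by
  simp [ProcessedBefore, procKey, Prod.Lex.toLex_lt_toLex]

theorem processedBefore_of_density_lt (h : density f q (B y) < density f q (B x)) :
    ProcessedBefore f q B x y :=
  processedBefore_iff.mpr (Or.inl h)

theorem ProcessedBefore.density_le (h : ProcessedBefore f q B x y) :
    density f q (B y) ≤ density f q (B x) := by
  rcases processedBefore_iff.mp h with h | ⟨h, -⟩
  exacts [h.le, h.ge]

theorem ProcessedBefore.ne (h : ProcessedBefore f q B x y) : x ≠ y := by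
  rintro rfl
  exact lt_irrefl _ h

theorem processedBefore_or_processedBefore (h : x ≠ y) :
    ProcessedBefore f q B x y ∨ ProcessedBefore f q B y x :=
  lt_or_gt_of_ne fun hxy => h (congrArg (·.2) hxy)

variable (f q B) in
theorem processedBefore_wellFounded : WellFounded (ProcessedBefore f q B) :=
  haveI : IsTrans (Fin n) (ProcessedBefore f q B) := ⟨fun _ _ _ => lt_trans⟩
  haveI : Std.Irrefl (ProcessedBefore f q B) := ⟨fun _ => lt_irrefl _⟩
  Finite.wellFounded_of_trans_of_irrefl _

theorem mem_sortedBids {A : Finset (Fin n)} : x ∈ sortedBids f q B A ↔ x ∈ A := by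
  simp [sortedBids]

theorem pairwise_sortedBids (A : Finset (Fin n)) :
    (sortedBids f q B A).Pairwise (ProcessedBefore f q B) := by
  set le := fun i j : Fin n => decide (density f q (B j) ≤ density f q (B i))
  have htrans : ∀ a b c, le a b → le b c → le a c := by
    simp only [le, decide_eq_true_eq]
    exact fun _ _ _ hab hbc => hbc.trans hab
  have htotal : ∀ a b, (le a b || le b a) := by simp [le, le_total]
  have hnodup : (sortedBids f q B A).Nodup :=
    (List.mergeSort_perm _ _).nodup_iff.mpr (A.sort_nodup _)
  refine List.pairwise_iff_forall_sublist.mpr fun {a b} hab => ?_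
  have hne : a ≠ b := List.pairwise_iff_forall_sublist.mp hnodup hab
  have hle : density f q (B b) ≤ density f q (B a) := by
    simpa [le] using List.pairwise_iff_forall_sublist.mp
      (List.pairwise_mergeSort htrans htotal _) hab
  rcases hle.lt_or_eq with hlt | heq
  · exact processedBefore_of_density_lt hlt
  refine processedBefore_iff.mpr (Or.inr ⟨heq.symm, hne.lt_of_le ?_⟩)
  by_contra! hba
  -- stability of `mergeSort` would keep `[b, a]` as a sublist, next to `[a, b]`
  have hsub : List.Sublist [b, a] (A.sort (· ≤ ·)) := by
    refine List.sublist_of_subperm_of_pairwise (r := (· ≤ ·)) ?_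
      (List.pairwise_pair.mpr hba.le) (A.pairwise_sort _)
    refine List.subperm_of_subset (by simpa using hne.symm) fun x hx => ?_
    have := hab.subset (by simpa [or_comm] using hx)
    rwa [mem_sortedBids, ← Finset.mem_sort (· ≤ ·)] at this
  have hba' : List.Sublist [b, a] (sortedBids f q B A) :=
    List.pair_sublist_mergeSort htrans htotal (by simp [heq]) hsub
  exact hne (List.cons_eq_cons.mp ((hnodup.perm_iff_eq_of_sublist hab hba').mp (.swap b a []))).1

variable {o : Fin k → ℝ} {s : Fin k → ℕ}

/-- (ARC) and (RPC) for `x` once the indices in `W` are granted. -/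
def CanGrant (o : Fin k → ℝ) (s : Fin k → ℕ) (B : Fin n → Bid k) (W : Finset (Fin n))
    (x : Fin n) : Prop :=
  (∀ i, (B x).1 i + ∑ w ∈ W, (B w).1 i ≤ s i) ∧ ohat o (B x).1 ≤ (B x).2

theorem CanGrant.mono {W W' : Finset (Fin n)} (h : CanGrant o s B W x) (hW : W' ⊆ W) :
    CanGrant o s B W' x :=
  ⟨fun i => le_trans (by gcongr) (h.1 i), h.2⟩

theorem canGrant_congr {B' : Fin n → Bid k} {W : Finset (Fin n)} (hW : ∀ w ∈ W, B w = B' w)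
    (hx : B x = B' x) : CanGrant o s B W x ↔ CanGrant o s B' W x := by
  have hsum (i : Fin k) : ∑ w ∈ W, (B w).1 i = ∑ w ∈ W, (B' w).1 i :=
    Finset.sum_congr rfl fun w hw => by rw [hW w hw]
  simp only [CanGrant, hx, hsum]

instance {W : Finset (Fin n)} : Decidable (CanGrant o s B W x) :=
  inferInstanceAs (Decidable ((∀ _, _) ∧ _))

def grantedBefore (o f : Fin k → ℝ) (s : Fin k → ℕ) (q : ℝ) (B : Fin n → Bid k)
    (A : Finset (Fin n)) (x : Fin n) : Finset (Fin n) :=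
  (grants o f s q B A).filter (ProcessedBefore f q B · x)

theorem grants_eq_foldl (A : Finset (Fin n)) :
    grants o f s q B A = (sortedBids f q B A).foldl (greedyStep (CanGrant o s B)) ∅ :=
  rfl

theorem mem_grants_iff {A : Finset (Fin n)} :
    x ∈ grants o f s q B A ↔ x ∈ A ∧ CanGrant o s B (grantedBefore o f s q B A x) x := by
  rw [grants_eq_foldl, mem_foldl_greedyStep_iff (fun _ _ => lt_asymm) (pairwise_sortedBids A),
    mem_sortedBids]
  rfl

theorem grants_subset (A : Finset (Fin n)) : grants o f s q B A ⊆ A :=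
  fun _ hx => (mem_grants_iff.mp hx).1

theorem sum_grants_le (A : Finset (Fin n)) (i : Fin k) :
    ∑ w ∈ grants o f s q B A, (B w).1 i ≤ s i := by
  rw [grants_eq_foldl]
  refine foldl_greedyStep_induction (Q := fun W => ∑ w ∈ W, (B w).1 i ≤ s i)
    (fun W x _ hW hx => ?_) (by simp)
  by_cases hxW : x ∈ W
  · rwa [Finset.insert_eq_of_mem hxW]
  · rw [Finset.sum_insert hxW]
    exact hx.1 i

theorem grants_congr {B' : Fin n → Bid k} {A : Finset (Fin n)} (h : ∀ x ∈ A, B x = B' x) :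
    grants o f s q B A = grants o f s q B' A := by
  ext x
  induction x using (processedBefore_wellFounded f q B).induction with
  | _ x ih =>
  by_cases hxA : x ∈ A
  swap
  · exact iff_of_false (hxA <| grants_subset A ·) (hxA <| grants_subset A ·)
  have hbefore : grantedBefore o f s q B A x = grantedBefore o f s q B' A x := by
    have horder (w : Fin n) (hw : w ∈ A) :
        ProcessedBefore f q B w x ↔ ProcessedBefore f q B' w x := by
      simp only [ProcessedBefore, procKey, h w hw, h x hxA]
    ext w
    simp only [grantedBefore, Finset.mem_filter]
    constructor
    · rintro ⟨hw, hwx⟩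
      exact ⟨(ih w hwx).mp hw, (horder w (grants_subset A hw)).mp hwx⟩
    · rintro ⟨hw, hwx⟩
      have hwx' := (horder w (grants_subset A hw)).mpr hwx
      exact ⟨(ih w hwx').mpr hw, hwx'⟩
  rw [mem_grants_iff, mem_grants_iff, hbefore, canGrant_congr _ (h x hxA)]
  exact fun w hw => h w (grants_subset A (Finset.mem_filter.mp hw).1)

theorem mem_grants_erase_iff {A : Finset (Fin n)} {j : Fin n}
    (hx : ProcessedBefore f q B x j) :
    x ∈ grants o f s q B (A.erase j) ↔ x ∈ grants o f s q B A := by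
  induction x using (processedBefore_wellFounded f q B).induction with
  | _ x ih =>
  have hbefore : grantedBefore o f s q B (A.erase j) x = grantedBefore o f s q B A x := by
    ext w
    simp only [grantedBefore, Finset.mem_filter]
    exact and_congr_left fun hwx => ih w hwx (lt_trans hwx hx)
  rw [mem_grants_iff, mem_grants_iff, hbefore, Finset.mem_erase, and_iff_right hx.ne]

variable {j c : Fin n}

theorem sum_update_fst {b : Bid k} {S : Finset (Fin n)} (hj : j ∉ S) (i : Fin k) :
    ∑ w ∈ S, (Function.update B j b w).1 i = ∑ w ∈ S, (B w).1 i :=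
  Finset.sum_congr rfl fun w hw => by rw [Function.update_of_ne (ne_of_mem_of_not_mem hw hj)]

theorem mem_winners_update_iff {b : Bid k} (hx : ProcessedBefore f q (Function.update B j b) x j) :
    x ∈ winners o f s q (Function.update B j b) ↔ x ∈ grants o f s q B (univ.erase j) := by
  rw [winners, ← mem_grants_erase_iff hx,
    grants_congr fun y hy => Function.update_of_ne (ne_of_mem_erase hy) b B]

theorem density_le_ecomp (hc : c ∈ competitorSet o f s q B j) :
    density f q (B c) ≤ ecomp o f s q B j := by
  rw [ecomp, dif_pos ⟨c, hc⟩]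
  exact le_sup' (fun i => density f q (B i)) hc

theorem ecomp_eq_density (hc : c ∈ competitorSet o f s q B j)
    (hmax : ∀ x ∈ competitorSet o f s q B j, density f q (B x) ≤ density f q (B c)) :
    ecomp o f s q B j = density f q (B c) := by
  refine le_antisymm ?_ (density_le_ecomp hc)
  rw [ecomp, dif_pos ⟨c, hc⟩]
  exact sup'_le _ _ hmax

theorem mem_competitorSet_of_first_divergence (hcj : c ≠ j)
    (hdiv : ¬(c ∈ winners o f s q B ↔ c ∈ grants o f s q B (univ.erase j)))
    (hagree : ∀ x, ProcessedBefore f q B x c → x ≠ j →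
      (x ∈ winners o f s q B ↔ x ∈ grants o f s q B (univ.erase j))) :
    c ∈ competitorSet o f s q B j ∧ ∃ i, s i <
      (B j).1 i + ((B c).1 i + ∑ w ∈ grantedBefore o f s q B (univ.erase j) c, (B w).1 i) := by
  have hne (w : Fin n) (hw : w ∈ grants o f s q B (univ.erase j)) : w ≠ j :=
    ne_of_mem_erase (grants_subset _ hw)
  have hsub : grantedBefore o f s q B (univ.erase j) c ⊆ grantedBefore o f s q B univ c := by
    intro w hw
    obtain ⟨hw, hwc⟩ := mem_filter.mp hw
    exact mem_filter.mpr ⟨(hagree w hwc (hne w hw)).mpr hw, hwc⟩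
  have hsub' : grantedBefore o f s q B univ c ⊆
      insert j (grantedBefore o f s q B (univ.erase j) c) := by
    intro w hw
    obtain ⟨hw, hwc⟩ := mem_filter.mp hw
    rcases eq_or_ne w j with rfl | hwj
    · exact mem_insert_self _ _
    · exact mem_insert_of_mem (mem_filter.mpr ⟨(hagree w hwc hwj).mp hw, hwc⟩)
  have hcW : c ∉ winners o f s q B := fun hcW => hdiv <| iff_of_true hcW <|
    mem_grants_iff.mpr ⟨mem_erase.mpr ⟨hcj, mem_univ c⟩, (mem_grants_iff.mp hcW).2.mono hsub⟩
  have hcErase : c ∈ grants o f s q B (univ.erase j) := by tauto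
  refine ⟨mem_sdiff.mpr ⟨hcErase, hcW⟩, ?_⟩
  obtain ⟨i, hi⟩ : ∃ i, s i < (B c).1 i + ∑ w ∈ grantedBefore o f s q B univ c, (B w).1 i := by
    by_contra! h
    exact hcW (mem_grants_iff.mpr ⟨mem_univ c, h, (mem_grants_iff.mp hcErase).2.2⟩)
  have hj : j ∉ grantedBefore o f s q B (univ.erase j) c :=
    fun h => hne j (mem_filter.mp h).1 rfl
  refine ⟨i, hi.trans_le ?_⟩
  calc (B c).1 i + ∑ w ∈ grantedBefore o f s q B univ c, (B w).1 i
      ≤ (B c).1 i + ∑ w ∈ insert j (grantedBefore o f s q B (univ.erase j) c), (B w).1 i := by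
        gcongr
    _ = _ := by rw [sum_insert hj, add_left_comm]

theorem exists_blocking_competitor (hC : (competitorSet o f s q B j).Nonempty) :
    ∃ c ∈ competitorSet o f s q B j,
      (∀ x ∈ competitorSet o f s q B j, density f q (B x) ≤ density f q (B c)) ∧ ∃ i, s i <
        (B j).1 i + ((B c).1 i + ∑ w ∈ grantedBefore o f s q B (univ.erase j) c, (B w).1 i) := by
  set D : Set (Fin n) :=
    {x | x ≠ j ∧ ¬(x ∈ winners o f s q B ↔ x ∈ grants o f s q B (univ.erase j))}
  have hCD (x : Fin n) (hx : x ∈ competitorSet o f s q B j) : x ∈ D := by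
    obtain ⟨hxErase, hxW⟩ := mem_sdiff.mp hx
    exact ⟨ne_of_mem_erase (grants_subset _ hxErase), fun h => hxW (h.mpr hxErase)⟩
  obtain ⟨x₀, hx₀⟩ := hC
  obtain ⟨c, ⟨hcj, hdiv⟩, hmin⟩ :=
    (processedBefore_wellFounded f q B).has_min D ⟨x₀, hCD x₀ hx₀⟩
  obtain ⟨hc, hblock⟩ := mem_competitorSet_of_first_divergence hcj hdiv fun x hxc hxj => by
    by_contra h
    exact hmin x ⟨hxj, h⟩ hxc
  refine ⟨c, hc, fun x hx => ?_, hblock⟩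
  rcases eq_or_ne x c with rfl | hxc
  · rfl
  · exact ((processedBefore_or_processedBefore hxc).resolve_left (hmin x (hCD x hx))).density_le

theorem mem_winners_update (hj : j ∈ winners o f s q B) {v : ℝ}
    (hcomp : ∀ c ∈ competitorSet o f s q B j, density f q (B c) < density f q ((B j).1, v))
    (hres : ohat o (B j).1 ≤ v) :
    j ∈ winners o f s q (Function.update B j ((B j).1, v)) := by
  set B' := Function.update B j ((B j).1, v)
  have hB'j : B' j = ((B j).1, v) := Function.update_self ..
  have hsub : grantedBefore o f s q B' univ j ⊆ (winners o f s q B).erase j := by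
    intro w hw
    obtain ⟨hwin', hwj⟩ := mem_filter.mp hw
    refine mem_erase.mpr ⟨hwj.ne, by_contra fun hwin => ?_⟩
    have hlt := hcomp w (mem_sdiff.mpr ⟨(mem_winners_update_iff hwj).mp hwin', hwin⟩)
    have hle := hwj.density_le
    rw [hB'j, show B' w = B w from Function.update_of_ne hwj.ne _ _] at hle
    exact hle.not_gt hlt
  have hj' : j ∉ grantedBefore o f s q B' univ j := fun h => notMem_erase j _ (hsub h)
  refine mem_grants_iff.mpr ⟨mem_univ j, fun i => ?_, by rwa [hB'j]⟩
  calc (B' j).1 i + ∑ w ∈ grantedBefore o f s q B' univ j, (B' w).1 i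
      = (B j).1 i + ∑ w ∈ grantedBefore o f s q B' univ j, (B w).1 i := by
        rw [hB'j]
        exact congrArg _ (sum_update_fst hj' i)
    _ ≤ (B j).1 i + ∑ w ∈ (winners o f s q B).erase j, (B w).1 i := by gcongr
    _ = ∑ w ∈ winners o f s q B, (B w).1 i := add_sum_erase _ (fun w => (B w).1 i) hj
    _ ≤ s i := sum_grants_le _ i

theorem notMem_winners_update (hC : (competitorSet o f s q B j).Nonempty) {v : ℝ}
    (hlt : density f q ((B j).1, v) < ecomp o f s q B j) :
    j ∉ winners o f s q (Function.update B j ((B j).1, v)) := by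
  set B' := Function.update B j ((B j).1, v)
  have hB'j : B' j = ((B j).1, v) := Function.update_self ..
  obtain ⟨c, hc, hmax, i, hi⟩ := exists_blocking_competitor hC
  rw [ecomp_eq_density hc hmax] at hlt
  set G := grantedBefore o f s q B (univ.erase j) c
  have hcErase : c ∈ grants o f s q B (univ.erase j) := (mem_sdiff.mp hc).1
  have hGErase (w : Fin n) (hw : w ∈ G) : w ∈ grants o f s q B (univ.erase j) :=
    (mem_filter.mp hw).1
  have hcG : c ∉ G := fun h => lt_irrefl _ (mem_filter.mp h).2
  have hjG : j ∉ insert c G := by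
    simp only [mem_insert, not_or]
    exact ⟨(ne_of_mem_erase (grants_subset _ hcErase)).symm,
      fun h => ne_of_mem_erase (grants_subset _ (hGErase j h)) rfl⟩
  have hsub : insert c G ⊆ grantedBefore o f s q B' univ j := by
    intro w hw
    have hwErase : w ∈ grants o f s q B (univ.erase j) :=
      (mem_insert.mp hw).elim (· ▸ hcErase) (hGErase w)
    have hcw : density f q (B c) ≤ density f q (B w) :=
      (mem_insert.mp hw).elim (· ▸ le_rfl) fun h => (mem_filter.mp h).2.density_le
    have hwj : ProcessedBefore f q B' w j := by
      refine processedBefore_of_density_lt ?_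
      rw [hB'j, show B' w = B w from
        Function.update_of_ne (fun h : w = j => hjG (h ▸ hw)) _ _]
      exact hlt.trans_le hcw
    exact mem_filter.mpr ⟨(mem_winners_update_iff hwj).mpr hwErase, hwj⟩
  intro hjW
  refine hi.not_ge (le_trans ?_ ((mem_grants_iff.mp hjW).2.1 i))
  calc (B j).1 i + ((B c).1 i + ∑ w ∈ G, (B w).1 i)
      = (B' j).1 i + ∑ w ∈ insert c G, (B' w).1 i := by
        rw [hB'j]
        exact congrArg _ ((sum_update_fst hjG i).trans (sum_insert hcG)).symm
    _ ≤ (B' j).1 i + ∑ w ∈ grantedBefore o f s q B' univ j, (B' w).1 i := by gcongr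

end GreedyRP

open GreedyRP in
theorem grpP_critical_value_general {k n : ℕ}
    (f o : Fin k → ℝ) (hf : ∀ i, 0 < f i)
    (s : Fin k → ℕ) (q : ℝ)
    (B : Fin n → Bid k) (hB : ∀ i, validBid (B i))
    (j : Fin n) (hwin : j ∈ winners o f s q B) (v' : ℝ) :
    (payment o f s q B j < v' →
        j ∈ winners o f s q (Function.update B j ((B j).1, v'))) ∧
    (0 ≤ v' → v' < payment o f s q B j →
        j ∉ winners o f s q (Function.update B j ((B j).1, v'))) := by
  have hd : 0 < dhat f (B j).1 ^ q := Real.rpow_pos_of_pos (dhat_pos hf (hB j).1) q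
  have hpay : payment o f s q B j =
      max (ecomp o f s q B j) (eres o f q (B j)) * dhat f (B j).1 ^ q := if_pos hwin
  have hres : eres o f q (B j) ≤ density f q ((B j).1, v') ↔ ohat o (B j).1 ≤ v' :=
    div_le_div_iff_of_pos_right hd
  constructor
  · intro hv
    have hgt : max (ecomp o f s q B j) (eres o f q (B j)) < density f q ((B j).1, v') := by
      rwa [density, lt_div_iff₀ hd, ← hpay]
    exact mem_winners_update hwin (fun c hc => (density_le_ecomp hc).trans_lt
      ((le_max_left _ _).trans_lt hgt)) (hres.mp ((le_max_right _ _).trans hgt.le))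
  · intro hv0 hv hjW
    have hlt : density f q ((B j).1, v') < max (ecomp o f s q B j) (eres o f q (B j)) := by
      rwa [density, div_lt_iff₀ hd, ← hpay]
    have hrpc : ohat o (B j).1 ≤ v' := by
      simpa using (mem_grants_iff.mp hjW).2.2
    have hecomp := (lt_max_iff.mp hlt).resolve_right (hres.mpr hrpc).not_gt
    have hC : (competitorSet o f s q B j).Nonempty := by
      by_contra hC
      rw [ecomp, dif_neg hC] at hecomp
      exact hecomp.not_ge (div_nonneg hv0 hd.le)
    exact notMem_winners_update hC hecomp hjW

/-- Lemma 2, the Greedy-RP pricing scheme determines critical-value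
payments: for a winner `j ∈ W(B)` with GRP-P payment `p_j`, keeping the bundle
`d_j` and all the other bids fixed, reporting any valuation `v' > p_j` makes `j`
granted by GRP-A, while reporting any valuation `0 ≤ v' < p_j` makes `j` denied. -/
theorem grpP_critical_value {k n : ℕ} (hk : 1 ≤ k)
    (f o : Fin k → ℝ) (hf : ∀ i, 0 < f i) (ho : ∀ i, 0 ≤ o i)
    (s : Fin k → ℕ) (q : ℝ) (hq : 0 < q)
    (B : Fin n → Bid k) (hB : ∀ i, validBid (B i))
    (j : Fin n) (hwin : j ∈ winners o f s q B) (v' : ℝ) :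
    (payment o f s q B j < v' →
        j ∈ winners o f s q (Function.update B j ((B j).1, v'))) ∧
    (0 ≤ v' → v' < payment o f s q B j →
        j ∉ winners o f s q (Function.update B j ((B j).1, v'))) :=
  grpP_critical_value_general f o hf s q B hB j hwin v'

end
end

section
/- Sufficiency of critical-value pricing with bundle-monotone thresholds for truthfulness (the abstract principle behind Theorem 1): fix a bidder, fix the reports of all other bidders, and suppose the mechanism's behaviour for this bidder is given by a threshold function c assigning to each nonzero bundle d a critical value c(d) ≥ 0 such that (i) a report (d, v) is granted if and only if v ≥ c(d) (exactness: a granted bidder receives exactly the reported bundle d), (ii) a granted bidder pays c(d) and a non-granted bidder pays 0 (participation), and (iii) c is monotone in the bundle: d' ≤ d pointwise implies c(d') ≤ c(d). Then for a single-minded bidder with true nonzero bundle d* and true valuation v* ≥ 0, whose utility from a granted report (d, v) is (v* if d* ≤ d pointwise, else 0) − c(d) and 0 otherwise, the truthful report (d*, v*) yields utility greater than or equal to that of every report (d, v). -/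
open Classical

noncomputable section

/-- sufficiency of critical-value pricing with bundle-monotone
thresholds for truthfulness. Fix a bidder and the reports of all other bidders, and
suppose the mechanism is described by a threshold function `c` assigning to each
nonzero bundle `d` a critical value `c d ≥ 0` such that (i) a report `(d, v)` is
granted iff `v ≥ c d` (and a granted bidder receives exactly the reported bundle
`d`), (ii) a granted bidder pays `c d` and a non-granted bidder pays `0`, and (iii)
`c` is monotone in the bundle. Then for a single-minded bidder with true type
`(dstar, vstar)`, `dstar` nonzero and `vstar ≥ 0`, whose utility from a report
`(d, v)` is `(vstar if dstar ≤ d else 0) − c d` when granted and `0` otherwise,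
the truthful report `(dstar, vstar)` yields utility at least that of every report
`(d, v)`. -/
theorem critical_value_pricing_truthful {k : ℕ} (hk : 1 ≤ k)
    (c : Bundle k → ℝ)
    (hc0 : ∀ d : Bundle k, nonzeroBundle d → 0 ≤ c d)
    (hmono : ∀ d d' : Bundle k, nonzeroBundle d → nonzeroBundle d' → d' ≤ d → c d' ≤ c d)
    (dstar : Bundle k) (hdstar : nonzeroBundle dstar) (vstar : ℝ) (hvstar : 0 ≤ vstar)
    (util : Bundle k → ℝ → ℝ)
    (hutil : ∀ (d : Bundle k) (v : ℝ),
        util d v = if c d ≤ v then (if dstar ≤ d then vstar else 0) - c d else 0)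
    (d : Bundle k) (hd : nonzeroBundle d) (v : ℝ) (hv : 0 ≤ v) :
    util d v ≤ util dstar vstar := by
  have htruth : util dstar vstar = if c dstar ≤ vstar then vstar - c dstar else 0 := by
    rw [hutil]; simp
  have h1 : 0 ≤ util dstar vstar := by
    rw [htruth]; split <;> linarith
  have h2 : vstar - c dstar ≤ util dstar vstar := by
    rw [htruth]; split <;> linarith
  rw [hutil]
  split
  · split
    · rename_i hle hds
      have := hmono d dstar hd hdstar hds
      linarith
    · have := hc0 d hd; linarith only [this, h1]
  · exact h1

end
end
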